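/- arXiv:1901.01177 — 3 statements merged into one kernel-verified Lean document; each statement's English description precedes it below -/
import Mathlib

section
/- For φ(ξ) = |ξ|^a with 1 < a < 2 on ℝ, if |ξ₁| ∼ K and |ξ₂| ∼ N with K ≤ N/4 and N ≥ 1, then |φ'(ξ₂) ± φ'(ξ₁)| ≥ c·N^{a−1} for a constant c > 0 depending only on a. That is, φ satisfies the transversality condition (T_{a−1}). -/
/-!
Write `p = a - 1 ∈ (0, 1)`, so `|φ'(ξ)| = a |ξ|^p`. Since `|ξ₁| < 2K ≤ N/2 ≤ |ξ₂|/2`, the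
reverse triangle inequality gives `|φ'(ξ₂) ± φ'(ξ₁)| ≥ a (|ξ₂|^p - |ξ₁|^p)
≥ a (N^p - (N/2)^p) = a (1 - 2^{-p}) N^p`, and `c = a (1 - 2^{1-a})` is positive because `p > 0`.
-/

open Real

lemma Real.abs_sign_of_ne_zero {r : ℝ} (hr : r ≠ 0) : |Real.sign r| = 1 := by
  rcases Real.sign_apply_eq_of_ne_zero r hr with h | h <;> simp [h]

lemma abs_mul_sign_mul_rpow_of_ne_zero {a : ℝ} (ha : 0 ≤ a) (p : ℝ) {ξ : ℝ} (hξ : ξ ≠ 0) :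
    |a * Real.sign ξ * |ξ| ^ p| = a * |ξ| ^ p := by
  rw [abs_mul, abs_mul, Real.abs_sign_of_ne_zero hξ, abs_of_nonneg ha,
    abs_of_nonneg (Real.rpow_nonneg (abs_nonneg ξ) p), mul_one]

lemma le_abs_add_and_le_abs_sub_of_le_abs_sub_abs {x y c : ℝ} (h : c ≤ |x| - |y|) :
    c ≤ |x + y| ∧ c ≤ |x - y| := by
  have hadd : |x| - |y| ≤ |x + y| := by
    simpa only [abs_neg, sub_neg_eq_add] using abs_sub_abs_le_abs_sub x (-y)
  exact ⟨h.trans hadd, h.trans (abs_sub_abs_le_abs_sub x y)⟩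

lemma one_sub_two_rpow_neg_mul_le_rpow_sub_rpow {p N u v : ℝ} (hp : 0 ≤ p) (hN : 0 < N)
    (hu : 0 ≤ u) (huN : u ≤ N / 2) (hNv : N ≤ v) :
    (1 - 2 ^ (-p)) * N ^ p ≤ v ^ p - u ^ p := by
  have hv : N ^ p ≤ v ^ p := Real.rpow_le_rpow hN.le hNv hp
  have hu : u ^ p ≤ (N / 2) ^ p := Real.rpow_le_rpow hu huN hp
  have hhalf : (N / 2) ^ p = 2 ^ (-p) * N ^ p := by
    rw [Real.div_rpow hN.le zero_le_two, Real.rpow_neg zero_le_two]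
    ring
  linarith

theorem transversality_fractional_general (a : ℝ) (ha1 : 1 < a)
    (φ' : ℝ → ℝ) (hφ' : φ' = fun ξ => a * Real.sign ξ * |ξ| ^ (a - 1)) :
    ∃ c > 0, ∀ K N ξ₁ ξ₂ : ℝ, 0 < K → 1 ≤ N → K ≤ N / 4 →
      K ≤ |ξ₁| → |ξ₁| < 2 * K → N ≤ |ξ₂| → |ξ₂| < 2 * N →
      c * N ^ (a - 1) ≤ |φ' ξ₂ + φ' ξ₁| ∧ c * N ^ (a - 1) ≤ |φ' ξ₂ - φ' ξ₁| := by
  have ha : 0 ≤ a := by linarith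
  have hgap : (2 : ℝ) ^ (-(a - 1)) < 1 :=
    Real.rpow_lt_one_of_one_lt_of_neg one_lt_two (by linarith)
  refine ⟨a * (1 - 2 ^ (-(a - 1))), mul_pos (by linarith) (by linarith), ?_⟩
  intro K N ξ₁ ξ₂ hK hN hKN h₁K h₁K' h₂N _
  have hξ₁ : ξ₁ ≠ 0 := abs_pos.mp (hK.trans_le h₁K)
  have hξ₂ : ξ₂ ≠ 0 := abs_pos.mp (zero_lt_one.trans_le (hN.trans h₂N))
  have hpow := one_sub_two_rpow_neg_mul_le_rpow_sub_rpow (p := a - 1) (by linarith)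
    (by linarith) (abs_nonneg ξ₁) (by linarith) h₂N
  apply le_abs_add_and_le_abs_sub_of_le_abs_sub_abs
  rw [hφ', abs_mul_sign_mul_rpow_of_ne_zero ha _ hξ₁, abs_mul_sign_mul_rpow_of_ne_zero ha _ hξ₂,
    mul_assoc, ← mul_sub]
  exact mul_le_mul_of_nonneg_left hpow ha

/-- For `φ(ξ) = |ξ|^a` on `ℝ` with `1 < a < 2`, whose derivative is
`φ'(ξ) = a · sgn(ξ) · |ξ|^{a-1}`, there is `c > 0` depending only on `a` such that whenever
`K ≤ |ξ₁| < 2K`, `N ≤ |ξ₂| < 2N`, `K ≤ N/4` and `N ≥ 1`, one has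
`|φ'(ξ₂) ± φ'(ξ₁)| ≥ c·N^{a-1}` (transversality condition `(T_{a-1})`). -/
theorem transversality_fractional (a : ℝ) (ha1 : 1 < a) (ha2 : a < 2)
    (φ' : ℝ → ℝ) (hφ' : φ' = fun ξ => a * Real.sign ξ * |ξ| ^ (a - 1)) :
    ∃ c > 0, ∀ K N ξ₁ ξ₂ : ℝ, 0 < K → 1 ≤ N → K ≤ N / 4 →
      K ≤ |ξ₁| → |ξ₁| < 2 * K → N ≤ |ξ₂| → |ξ₂| < 2 * N →
      c * N ^ (a - 1) ≤ |φ' ξ₂ + φ' ξ₁| ∧ c * N ^ (a - 1) ≤ |φ' ξ₂ - φ' ξ₁| :=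
  transversality_fractional_general a ha1 φ' hφ'
end

section
/- Let φ ∈ C²(ℝⁿ, ℝ). Then for any T > 0 and any finitely supported coefficients c : ℤⁿ → ℂ and p ≥ 1, ∫_0^T ∫_{[0,2π]ⁿ} |Σ_ξ c_ξ e^{i(x·(ξ₀+ξ) + tφ(ξ₀+ξ))}|^p dx dt = ∫_0^T ∫_{[0,2π]ⁿ} |Σ_ξ c_ξ e^{i(x·ξ + tψ_{ξ₀}(ξ))}|^p dx dt, where ψ_{ξ₀}(ξ) = φ(ξ₀+ξ) − φ(ξ₀) − ∇φ(ξ₀)·ξ. -/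
/-!
For fixed `t`, the phase `x·(ξ₀+ξ) + tφ(ξ₀+ξ)` equals `(x + t∇φ(ξ₀))·ξ + tψ(ξ)` plus the
`ξ`-independent term `x·ξ₀ + tφ(ξ₀)`, which only contributes a unimodular factor to the
exponential sum. So the left integrand is the right one translated by `t∇φ(ξ₀)` in `x`. The
right integrand is `2π`-periodic in each coordinate because the frequencies are integral, so it
descends to the torus `(ℝ/2πℤ)ⁿ`, where Haar measure is translation invariant.
-/

open Real MeasureTheory Set

section Torus

variable {ι : Type*} {T : ℝ} [hT : Fact (0 < T)]

noncomputable def torusLiftIoc (T : ℝ) [Fact (0 < T)] (z : ι → AddCircle T) : ι → ℝ :=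
  fun i => AddCircle.equivIoc T 0 (z i)

lemma measurable_torusLiftIoc : Measurable (torusLiftIoc (ι := ι) T) :=
  measurable_pi_lambda _ fun i => measurable_subtype_coe.comp
    ((AddCircle.measurableEquivIoc T 0).measurable.comp (measurable_pi_apply i))

lemma coe_torusLiftIoc (z : ι → AddCircle T) :
    (fun i => (torusLiftIoc T z i : AddCircle T)) = z := by
  funext i; simp [torusLiftIoc]

lemma torusLiftIoc_coe (x : ι → ℝ) :
    torusLiftIoc T (fun i => (x i : AddCircle T))
      = x + fun i => ((-toIocDiv hT.out 0 (x i) : ℤ) : ℝ) * T := by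
  funext i
  simp [torusLiftIoc, AddCircle.equivIoc, QuotientAddGroup.equivIocMod, toIocMod, sub_eq_add_neg]

variable {E : Type*} {F : (ι → ℝ) → E}

lemma apply_torusLiftIoc_coe_of_periodic (hF : ∀ x (k : ι → ℤ), F (x + fun i => k i * T) = F x)
    (x : ι → ℝ) : F (torusLiftIoc T fun i => (x i : AddCircle T)) = F x := by
  rw [torusLiftIoc_coe, hF]

variable [Fintype ι] [NormedAddCommGroup E] [NormedSpace ℝ E]

lemma measurePreserving_pi_coe_addCircle :
    MeasurePreserving (fun (x : ι → ℝ) i => (x i : AddCircle T))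
      (Measure.pi fun _ => volume.restrict (Ioc 0 T)) volume :=
  measurePreserving_pi _ _ fun _ => by simpa using AddCircle.measurePreserving_mk T 0

lemma setIntegral_pi_Icc_eq_integral_torus (hFm : StronglyMeasurable F)
    (hF : ∀ x (k : ι → ℤ), F (x + fun i => k i * T) = F x) :
    ∫ x in univ.pi fun _ => Icc 0 T, F x = ∫ z, F (torusLiftIoc T z) := by
  have hQ := measurePreserving_pi_coe_addCircle (ι := ι) (T := T)
  have hFQ : StronglyMeasurable fun z => F (torusLiftIoc T z) :=
    hFm.comp_measurable measurable_torusLiftIoc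
  rw [volume_pi, ← setIntegral_congr_set Measure.pi_Ioc_ae_eq_pi_Icc, Measure.restrict_pi_pi,
    ← hQ.map_eq, integral_map hQ.measurable.aemeasurable hFQ.aestronglyMeasurable]
  simp only [apply_torusLiftIoc_coe_of_periodic hF]

lemma setIntegral_pi_Icc_comp_add_right_of_periodic (hFm : StronglyMeasurable F)
    (hF : ∀ x (k : ι → ℤ), F (x + fun i => k i * T) = F x) (v : ι → ℝ) :
    ∫ x in univ.pi fun _ => Icc 0 T, F (x + v) = ∫ x in univ.pi fun _ => Icc 0 T, F x := by
  have hFv : ∀ z, F (torusLiftIoc T z + v)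
      = F (torusLiftIoc T (z + fun i => (v i : AddCircle T))) := fun z => by
    -- `torusLiftIoc T z + v` projects to `z + v` on the torus
    rw [← apply_torusLiftIoc_coe_of_periodic hF (torusLiftIoc T z + v)]
    conv_rhs => rw [← coe_torusLiftIoc z]
    rfl
  rw [setIntegral_pi_Icc_eq_integral_torus (F := fun x => F (x + v))
      (hFm.comp_measurable (measurable_add_const v)) fun x k => by simp only [add_right_comm x, hF],
    setIntegral_pi_Icc_eq_integral_torus hFm hF]
  simp only [hFv]
  exact integral_add_right_eq_self (fun z => F (torusLiftIoc T z)) _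

end Torus

section TrigSum

variable {ι : Type*} [Fintype ι]

noncomputable def trigSum (s : Finset (ι → ℤ)) (c : (ι → ℤ) → ℂ) (θ : (ι → ℤ) → ℝ)
    (x : ι → ℝ) : ℂ :=
  ∑ ξ ∈ s, c ξ * Complex.exp (Complex.I * (((∑ i, x i * (ξ i : ℝ)) + θ ξ : ℝ) : ℂ))

variable (s : Finset (ι → ℤ)) (c : (ι → ℤ) → ℂ) (θ : (ι → ℤ) → ℝ)

lemma continuous_trigSum : Continuous (trigSum s c θ) := by
  unfold trigSum
  fun_prop

lemma trigSum_add_const_phase (r : ℝ) (x : ι → ℝ) :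
    trigSum s c (fun ξ => θ ξ + r) x = Complex.exp (Complex.I * r) * trigSum s c θ x := by
  simp only [trigSum, Finset.mul_sum]
  refine Finset.sum_congr rfl fun ξ _ => ?_
  rw [mul_left_comm, ← Complex.exp_add]
  push_cast
  ring_nf

lemma trigSum_add (x v : ι → ℝ) :
    trigSum s c θ (x + v) = trigSum s c (fun ξ => θ ξ + ∑ i, v i * ξ i) x := by
  simp only [trigSum, Pi.add_apply, add_mul, Finset.sum_add_distrib, add_right_comm _ _ (θ _),
    add_assoc]

lemma trigSum_add_int_mul_two_pi (x : ι → ℝ) (k : ι → ℤ) :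
    trigSum s c θ (x + fun i => k i * (2 * π)) = trigSum s c θ x := by
  rw [trigSum_add]
  refine Finset.sum_congr rfl fun ξ _ => ?_
  dsimp only
  have hsum : ∑ i, (k i : ℝ) * (2 * π) * ξ i = ((∑ i, k i * ξ i : ℤ) : ℝ) * (2 * π) := by
    push_cast; rw [Finset.sum_mul]; exact Finset.sum_congr rfl fun i _ => by ring
  have hperiod (m : ℤ) : Complex.exp (Complex.I * ((m * (2 * π) : ℝ) : ℂ)) = 1 := by
    push_cast
    rw [show Complex.I * (m * (2 * π)) = m * (2 * π * Complex.I) by ring]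
    exact Complex.exp_int_mul_two_pi_mul_I m
  rw [hsum, ← add_assoc, Complex.ofReal_add, mul_add, Complex.exp_add, hperiod, mul_one]

end TrigSum

theorem galilean_Lp_identity_general (n : ℕ) (φ : (Fin n → ℝ) → ℝ)
    (ξ₀ : Fin n → ℝ) (g : Fin n → ℝ)
    (ψ : (Fin n → ℤ) → ℝ)
    (hψ : ∀ ξ : Fin n → ℤ,
      ψ ξ = φ (ξ₀ + fun i => (ξ i : ℝ)) - φ ξ₀ - ∑ i, g i * (ξ i : ℝ))
    (s : Finset (Fin n → ℤ)) (c : (Fin n → ℤ) → ℂ) (T p : ℝ) :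
    (∫ t in (0:ℝ)..T, ∫ x in Set.univ.pi (fun _ : Fin n => Set.Icc (0:ℝ) (2*π)),
        ‖∑ ξ ∈ s, c ξ * Complex.exp (Complex.I *
          (((∑ i, x i * (ξ₀ i + (ξ i : ℝ))) + t * φ (ξ₀ + fun i => (ξ i : ℝ)) : ℝ) : ℂ))‖ ^ p)
      = ∫ t in (0:ℝ)..T, ∫ x in Set.univ.pi (fun _ : Fin n => Set.Icc (0:ℝ) (2*π)),
        ‖∑ ξ ∈ s, c ξ * Complex.exp (Complex.I *
          (((∑ i, x i * (ξ i : ℝ)) + t * ψ ξ : ℝ) : ℂ))‖ ^ p := by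
  have : Fact ((0 : ℝ) < 2 * π) := ⟨by positivity⟩
  refine intervalIntegral.integral_congr fun t _ => ?_
  have hphase : ∀ x : Fin n → ℝ, ∑ ξ ∈ s, c ξ * Complex.exp (Complex.I *
      (((∑ i, x i * (ξ₀ i + (ξ i : ℝ))) + t * φ (ξ₀ + fun i => (ξ i : ℝ)) : ℝ) : ℂ))
      = Complex.exp (Complex.I * ((∑ i, x i * ξ₀ i + t * φ ξ₀ : ℝ) : ℂ))
        * trigSum s c (fun ξ => t * ψ ξ) (x + t • g) := by
    intro x
    rw [trigSum_add, ← trigSum_add_const_phase]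
    refine Finset.sum_congr rfl fun ξ _ => ?_
    dsimp only
    rw [hψ]
    congr 4
    simp only [Pi.smul_apply, smul_eq_mul, mul_add, mul_sub, Finset.sum_add_distrib,
      Finset.mul_sum, mul_assoc]
    ring
  simp only [hphase, norm_mul, Complex.norm_exp_I_mul_ofReal, one_mul]
  exact setIntegral_pi_Icc_comp_add_right_of_periodic
    ((continuous_trigSum s c _).measurable.norm.pow_const p).stronglyMeasurable
    (fun x k => by simp only [trigSum_add_int_mul_two_pi]) (t • g)

/-- Galilean invariance of space-time `L^p` integrals on the torus: for
`φ ∈ C²(ℝⁿ,ℝ)`, finitely supported `c : ℤⁿ → ℂ`, `T > 0`, `p ≥ 1`, the `L^p(I×[0,2π]ⁿ)`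
integral of the exponential sum with frequency-shifted phase `x·(ξ₀+ξ) + tφ(ξ₀+ξ)` equals
the one with recentered phase `x·ξ + tψ_{ξ₀}(ξ)`, where
`ψ_{ξ₀}(ξ) = φ(ξ₀+ξ) − φ(ξ₀) − ∇φ(ξ₀)·ξ`. -/
theorem galilean_Lp_identity (n : ℕ) (φ : (Fin n → ℝ) → ℝ) (hφ : ContDiff ℝ 2 φ)
    (ξ₀ : Fin n → ℝ) (g : Fin n → ℝ) (hg : ∀ i, g i = fderiv ℝ φ ξ₀ (Pi.single i 1))
    (ψ : (Fin n → ℤ) → ℝ)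
    (hψ : ∀ ξ : Fin n → ℤ,
      ψ ξ = φ (ξ₀ + fun i => (ξ i : ℝ)) - φ ξ₀ - ∑ i, g i * (ξ i : ℝ))
    (s : Finset (Fin n → ℤ)) (c : (Fin n → ℤ) → ℂ) (T p : ℝ) (hT : 0 < T) (hp : 1 ≤ p) :
    (∫ t in (0:ℝ)..T, ∫ x in Set.univ.pi (fun _ : Fin n => Set.Icc (0:ℝ) (2*π)),
        ‖∑ ξ ∈ s, c ξ * Complex.exp (Complex.I *
          (((∑ i, x i * (ξ₀ i + (ξ i : ℝ))) + t * φ (ξ₀ + fun i => (ξ i : ℝ)) : ℝ) : ℂ))‖ ^ p)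
      = ∫ t in (0:ℝ)..T, ∫ x in Set.univ.pi (fun _ : Fin n => Set.Icc (0:ℝ) (2*π)),
        ‖∑ ξ ∈ s, c ξ * Complex.exp (Complex.I *
          (((∑ i, x i * (ξ i : ℝ)) + t * ψ ξ : ℝ) : ℂ))‖ ^ p :=
  galilean_Lp_identity_general n φ ξ₀ g ψ hψ s c T p
end

section
/- Let φ_N(x) = N^{-1} Σ_{|k₁|,|k₂| ≤ N} e^{ik₁x₁}e^{−ik₁x₂}e^{ik₂x₃}e^{−ik₂x₄} on 𝕋⁴. Then ‖φ_N‖_{H^s(𝕋⁴)} ∼ N^s for s ≥ 0, and φ_N is invariant under the flow e^{it(∂²_{x₁}−∂²_{x₂}+∂²_{x₃}−∂²_{x₄})}. -/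
/-!
The coefficients of `φ_N` equal `N⁻¹` exactly on the `(2N+1)²` modes `(k₁,-k₁,k₂,-k₂)` with
`|k₁|, |k₂| ≤ N`, where the Sobolev weight is `(1 + 2k₁² + 2k₂²)^s`, so
`‖φ_N‖²_{H^s} = (2π)⁴ N⁻² Σ (1 + 2k₁² + 2k₂²)^s`. Every weight is at most `(5N²)^s`, while on the
`≥ N²` modes with `k₁ ≥ ⌊N/2⌋` it is at least `(N²/4)^s`; this gives `‖φ_N‖²_{H^s} ≈ N^{2s}`.
On these modes the symbol `k₁² - k₁² + k₂² - k₂²` of the flow vanishes, so the flow fixes `φ_N`.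
-/

open Real

/-- Fourier coefficients of `φ_N(x) = N^{-1} Σ_{|k₁|,|k₂|≤N} e^{ik₁x₁}e^{-ik₁x₂}e^{ik₂x₃}e^{-ik₂x₄}`
on `𝕋⁴`: `φ̂_N(ξ) = N^{-1}` if `ξ = (k₁,-k₁,k₂,-k₂)`, `|k₁|,|k₂| ≤ N`, else `0`. -/
noncomputable def phiN4coef (N : ℕ) (ξ : Fin 4 → ℤ) : ℂ :=
  if ξ 1 = -ξ 0 ∧ ξ 3 = -ξ 2 ∧ |ξ 0| ≤ (N : ℤ) ∧ |ξ 2| ≤ (N : ℤ) then ((N : ℝ)⁻¹ : ℝ) else 0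

/-- Squared `H^s(𝕋⁴)` norm of `φ_N` via Fourier coefficients. -/
noncomputable def HsSq4 (s : ℝ) (N : ℕ) : ℝ :=
  (2 * π) ^ 4 * ∑' ξ : Fin 4 → ℤ, (1 + ∑ i, ((ξ i : ℝ)) ^ 2) ^ s * ‖phiN4coef N ξ‖ ^ 2

def phiN4Mode (k : ℤ × ℤ) : Fin 4 → ℤ := ![k.1, -k.1, k.2, -k.2]

lemma phiN4Mode_injective : Function.Injective phiN4Mode := fun a b h =>
  Prod.ext (by simpa [phiN4Mode] using congrFun h 0) (by simpa [phiN4Mode] using congrFun h 2)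

lemma phiN4coef_phiN4Mode (N : ℕ) (k : ℤ × ℤ) :
    phiN4coef N (phiN4Mode k) =
      if k ∈ Finset.Icc (-(N : ℤ)) N ×ˢ Finset.Icc (-(N : ℤ)) N then ((N : ℝ)⁻¹ : ℂ) else 0 := by
  simp [phiN4coef, phiN4Mode, abs_le]

lemma support_phiN4coef_subset (N : ℕ) :
    Function.support (phiN4coef N) ⊆ Set.range phiN4Mode := by
  intro ξ hξ
  rw [Function.mem_support, phiN4coef, ite_ne_right_iff] at hξ
  refine ⟨(ξ 0, ξ 2), funext fun i => ?_⟩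
  fin_cases i <;> simp [phiN4Mode, hξ.1.1, hξ.1.2.1]

lemma sum_sq_phiN4Mode (k : ℤ × ℤ) :
    ∑ i, ((phiN4Mode k i : ℤ) : ℝ) ^ 2 = 2 * (k.1 : ℝ) ^ 2 + 2 * (k.2 : ℝ) ^ 2 := by
  simp only [phiN4Mode, Fin.sum_univ_four, Fin.isValue, Matrix.cons_val_zero,
    Matrix.cons_val_one, Matrix.cons_val, Int.cast_neg, even_two, Even.neg_pow]
  ring

lemma HsSq4_eq_sum (s : ℝ) (N : ℕ) :
    HsSq4 s N = (2 * π) ^ 4 * ((N : ℝ)⁻¹) ^ 2 *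
      ∑ k ∈ Finset.Icc (-(N : ℤ)) N ×ˢ Finset.Icc (-(N : ℤ)) N,
        (1 + 2 * (k.1 : ℝ) ^ 2 + 2 * (k.2 : ℝ) ^ 2) ^ s := by
  have hsupp : Function.support (fun ξ : Fin 4 → ℤ =>
      (1 + ∑ i, ((ξ i : ℝ)) ^ 2) ^ s * ‖phiN4coef N ξ‖ ^ 2) ⊆ Set.range phiN4Mode :=
    (Function.support_mul_subset_right _ _).trans <| by
      simpa [Function.support_pow] using support_phiN4coef_subset N
  rw [HsSq4, ← Function.Injective.tsum_eq phiN4Mode_injective hsupp,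
    tsum_eq_sum (s := Finset.Icc (-(N : ℤ)) N ×ˢ Finset.Icc (-(N : ℤ)) N)]
  · rw [mul_assoc]
    congr 1
    rw [Finset.mul_sum]
    refine Finset.sum_congr rfl fun k hk => ?_
    rw [phiN4coef_phiN4Mode, if_pos hk, sum_sq_phiN4Mode, ← add_assoc, mul_comm]
    simp
  · intro k hk
    simp [phiN4coef_phiN4Mode, hk]

lemma intCast_sq_le_of_mem_Icc {a : ℤ} {N : ℕ} (h : a ∈ Finset.Icc (-(N : ℤ)) N) :
    (a : ℝ) ^ 2 ≤ (N : ℝ) ^ 2 := by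
  rw [Finset.mem_Icc] at h
  exact_mod_cast (by nlinarith : a ^ 2 ≤ (N : ℤ) ^ 2)

lemma rpow_two_mul {x : ℝ} (hx : 0 ≤ x) (s : ℝ) : x ^ (2 * s) = (x ^ 2) ^ s := by
  exact_mod_cast Real.rpow_natCast_mul hx 2 s

section WeightSum

variable {s : ℝ} (N : ℕ)

lemma sum_weight_rpow_le (hs : 0 ≤ s) (hN : 1 ≤ N) :
    ∑ k ∈ Finset.Icc (-(N : ℤ)) N ×ˢ Finset.Icc (-(N : ℤ)) N,
        (1 + 2 * (k.1 : ℝ) ^ 2 + 2 * (k.2 : ℝ) ^ 2) ^ s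
      ≤ (2 * N + 1) ^ 2 * (5 * (N : ℝ) ^ 2) ^ s := by
  set B := Finset.Icc (-(N : ℤ)) N ×ˢ Finset.Icc (-(N : ℤ)) N
  have hcard : (B.card : ℝ) = (2 * N + 1) ^ 2 := by
    rw [Finset.card_product, Int.card_Icc, sq]
    exact_mod_cast congrArg₂ (· * ·) (by omega) (by omega)
  have hterm : ∀ k ∈ B,
      (1 + 2 * (k.1 : ℝ) ^ 2 + 2 * (k.2 : ℝ) ^ 2) ^ s ≤ (5 * (N : ℝ) ^ 2) ^ s := by
    intro k hk
    rw [Finset.mem_product] at hk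
    have h1 := intCast_sq_le_of_mem_Icc hk.1
    have h2 := intCast_sq_le_of_mem_Icc hk.2
    have hN' : (1 : ℝ) ≤ (N : ℝ) ^ 2 := by exact_mod_cast Nat.one_le_pow _ _ hN
    exact Real.rpow_le_rpow (by positivity) (by linarith) hs
  calc _ ≤ B.card • (5 * (N : ℝ) ^ 2) ^ s := Finset.sum_le_card_nsmul _ _ _ hterm
    _ = _ := by rw [nsmul_eq_mul, hcard]

lemma le_sum_weight_rpow (hs : 0 ≤ s) :
    (N : ℝ) ^ 2 * ((N : ℝ) ^ 2 / 4) ^ s ≤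
      ∑ k ∈ Finset.Icc (-(N : ℤ)) N ×ˢ Finset.Icc (-(N : ℤ)) N,
        (1 + 2 * (k.1 : ℝ) ^ 2 + 2 * (k.2 : ℝ) ^ 2) ^ s := by
  set m := N / 2
  have hm : N ≤ 2 * m + 1 := by omega
  set T := Finset.Icc (m : ℤ) N ×ˢ Finset.Icc (-(N : ℤ)) N
  have hcard : (N : ℝ) ^ 2 ≤ T.card := by
    have hT : T.card = (N + 1 - m) * (2 * N + 1) := by
      rw [Finset.card_product, Int.card_Icc, Int.card_Icc]
      exact congrArg₂ (· * ·) (by omega) (by omega)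
    have hhalf : N + 1 ≤ 2 * (N + 1 - m) := by omega
    exact_mod_cast (by rw [hT]; nlinarith : N ^ 2 ≤ T.card)
  have hterm : ∀ k ∈ T,
      ((N : ℝ) ^ 2 / 4) ^ s ≤ (1 + 2 * (k.1 : ℝ) ^ 2 + 2 * (k.2 : ℝ) ^ 2) ^ s := by
    intro k hk
    simp only [T, Finset.mem_product, Finset.mem_Icc] at hk
    have hmk : (m : ℝ) ≤ k.1 := by exact_mod_cast hk.1.1
    have hm' : (N : ℝ) ≤ 2 * m + 1 := by exact_mod_cast hm
    refine Real.rpow_le_rpow (by positivity) ?_ hs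
    nlinarith [sq_nonneg ((m : ℝ) - 1), sq_nonneg (k.2 : ℝ), (m.cast_nonneg : (0 : ℝ) ≤ m)]
  calc (N : ℝ) ^ 2 * ((N : ℝ) ^ 2 / 4) ^ s ≤ T.card • ((N : ℝ) ^ 2 / 4) ^ s := by
        rw [nsmul_eq_mul]; gcongr
    _ ≤ ∑ k ∈ T, (1 + 2 * (k.1 : ℝ) ^ 2 + 2 * (k.2 : ℝ) ^ 2) ^ s :=
        Finset.card_nsmul_le_sum _ _ _ hterm
    _ ≤ _ := Finset.sum_le_sum_of_subset_of_nonneg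
        (Finset.product_subset_product (Finset.Icc_subset_Icc (by omega) le_rfl) le_rfl)
        fun _ _ _ => by positivity

end WeightSum

section HsBounds

variable {s : ℝ} {N : ℕ}

lemma le_HsSq4 (hs : 0 ≤ s) (hN : 1 ≤ N) :
    (2 * π) ^ 4 / 4 ^ s * (N : ℝ) ^ (2 * s) ≤ HsSq4 s N := by
  have hN0 : (N : ℝ) ≠ 0 := by positivity
  calc (2 * π) ^ 4 / 4 ^ s * (N : ℝ) ^ (2 * s)
      = (2 * π) ^ 4 * ((N : ℝ)⁻¹) ^ 2 * ((N : ℝ) ^ 2 * ((N : ℝ) ^ 2 / 4) ^ s) := by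
        rw [Real.div_rpow (by positivity) (by norm_num), ← rpow_two_mul N.cast_nonneg]
        field_simp
    _ ≤ HsSq4 s N := by
        rw [HsSq4_eq_sum]
        gcongr
        exact le_sum_weight_rpow N hs

lemma HsSq4_le (hs : 0 ≤ s) (hN : 1 ≤ N) :
    HsSq4 s N ≤ (2 * π) ^ 4 * (9 * 5 ^ s) * (N : ℝ) ^ (2 * s) := by
  have hN1 : (1 : ℝ) ≤ N := by exact_mod_cast hN
  have hcount : (2 * N + 1) ^ 2 * ((N : ℝ)⁻¹) ^ 2 ≤ 9 := by
    rw [← mul_pow, show (9 : ℝ) = 3 ^ 2 by norm_num]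
    gcongr
    rw [mul_inv_le_iff₀ (by positivity)]
    linarith
  calc HsSq4 s N
      ≤ (2 * π) ^ 4 * ((N : ℝ)⁻¹) ^ 2 * ((2 * N + 1) ^ 2 * (5 * (N : ℝ) ^ 2) ^ s) := by
        rw [HsSq4_eq_sum]
        gcongr
        exact sum_weight_rpow_le N hs hN
    _ = (2 * π) ^ 4 * ((2 * N + 1) ^ 2 * ((N : ℝ)⁻¹) ^ 2) * 5 ^ s * (N : ℝ) ^ (2 * s) := by
        rw [Real.mul_rpow (by norm_num) (by positivity), ← rpow_two_mul N.cast_nonneg]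
        ring
    _ ≤ (2 * π) ^ 4 * 9 * 5 ^ s * (N : ℝ) ^ (2 * s) := by gcongr
    _ = _ := by ring

end HsBounds

/-- `‖φ_N‖_{H^s(𝕋⁴)} ∼ N^s` for `s ≥ 0` (constants independent of `N`), and
`φ_N` is invariant under the flow `e^{it(∂²_{x₁}-∂²_{x₂}+∂²_{x₃}-∂²_{x₄})}`, which acts on
the mode `(k₁,-k₁,k₂,-k₂)` by `e^{-it(k₁²-k₁²+k₂²-k₂²)} = 1`. -/
theorem phiN4_Hs_norm_and_invariance (s : ℝ) (hs : 0 ≤ s) :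
    (∃ c C : ℝ, 0 < c ∧ 0 < C ∧ ∀ N : ℕ, 1 ≤ N →
      c * (N : ℝ) ^ (2 * s) ≤ HsSq4 s N ∧ HsSq4 s N ≤ C * (N : ℝ) ^ (2 * s)) ∧
    (∀ (N : ℕ) (t : ℝ) (x : Fin 4 → ℝ),
      ((N : ℝ)⁻¹ : ℝ) * ∑ k ∈ Finset.Icc (-(N : ℤ)) (N : ℤ) ×ˢ Finset.Icc (-(N : ℤ)) (N : ℤ),
          Complex.exp (Complex.I *
            (((k.1 : ℝ) * x 0 - (k.1 : ℝ) * x 1 + (k.2 : ℝ) * x 2 - (k.2 : ℝ) * x 3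
              - t * ((k.1 : ℝ) ^ 2 - (k.1 : ℝ) ^ 2 + (k.2 : ℝ) ^ 2 - (k.2 : ℝ) ^ 2) : ℝ) : ℂ))
        = ((N : ℝ)⁻¹ : ℝ) * ∑ k ∈ Finset.Icc (-(N : ℤ)) (N : ℤ) ×ˢ Finset.Icc (-(N : ℤ)) (N : ℤ),
          Complex.exp (Complex.I *
            (((k.1 : ℝ) * x 0 - (k.1 : ℝ) * x 1 + (k.2 : ℝ) * x 2 - (k.2 : ℝ) * x 3 : ℝ) : ℂ))) := by
  refine ⟨⟨_, _, by positivity, by positivity, fun N hN => ⟨le_HsSq4 hs hN, HsSq4_le hs hN⟩⟩,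
    fun N t x => ?_⟩
  simp only [sub_self, zero_add, mul_zero, sub_zero]
end
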